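/- Let B be a real V×E matrix, m ≥ 0, and H = [[m I_V, B], [Bᵀ, −m I_E]]. Suppose u ∈ ℝ^V, v ∈ ℝ^E, σ > 0 satisfy B v = σ u and Bᵀ u = σ v, and set E₊ = √(σ² + m²) and k = σ/(E₊ + m). Then the spinor ψ⁺ = (u, k v) is an eigenstate of H with energy E₊: H ψ⁺ = E₊ ψ⁺. -/

import Mathlib

open Matrix

/-!
The mass term only rescales the two blocks: on `(x, y)` the matrix `H` acts as
`(m x + B y, Bᵀ x - m y)`, so for `ψ⁺ = (u, k v)` the singular-pair relations reduce the eigen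
equation to the scalar identities `k σ = E₊ - m` and `k (E₊ + m) = σ`. The second is the
definition of `k`, as `E₊ + m > 0` once `σ ≠ 0`; the first follows from
`σ² = E₊² - m² = (E₊ - m)(E₊ + m)`.
-/

theorem fromBlocks_mass_mulVec_sum_elim {ι κ R : Type*} [Fintype ι] [Fintype κ] [DecidableEq ι]
    [DecidableEq κ] [CommRing R] (m : R) (B : Matrix ι κ R) (x : ι → R) (y : κ → R) :
    fromBlocks (m • (1 : Matrix ι ι R)) B Bᵀ (-(m • (1 : Matrix κ κ R))) *ᵥ Sum.elim x y =
      Sum.elim (m • x + B *ᵥ y) (Bᵀ *ᵥ x - m • y) := by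
  rw [fromBlocks_mulVec, Sum.elim_comp_inl, Sum.elim_comp_inr, smul_mulVec, one_mulVec,
    neg_mulVec, smul_mulVec, one_mulVec, ← sub_eq_add_neg]

theorem fromBlocks_mass_mulVec_singular_pair {ι κ R : Type*} [Fintype ι] [Fintype κ]
    [DecidableEq ι] [DecidableEq κ] [CommRing R] {m σ Ep k : R} {B : Matrix ι κ R}
    {u : ι → R} {v : κ → R} (hBv : B *ᵥ v = σ • u) (hBu : Bᵀ *ᵥ u = σ • v)
    (hkσ : k * σ = Ep - m) (hkEp : k * (Ep + m) = σ) :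
    fromBlocks (m • (1 : Matrix ι ι R)) B Bᵀ (-(m • (1 : Matrix κ κ R))) *ᵥ Sum.elim u (k • v) =
      Ep • Sum.elim u (k • v) := by
  have hu : m • u + B *ᵥ (k • v) = Ep • u := by
    rw [mulVec_smul, hBv, smul_smul, hkσ, sub_smul, add_sub_cancel]
  have hv : Bᵀ *ᵥ u - m • (k • v) = Ep • (k • v) := by
    rw [hBu, ← hkEp, smul_smul, smul_smul, ← sub_smul]
    congr 1
    ring
  rw [fromBlocks_mass_mulVec_sum_elim, hu, hv]
  exact (Sum.comp_elim (Ep • ·) u (k • v)).symm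

theorem div_add_mul_self_eq_sub {K : Type*} [Field K] {σ m Ep : K} (hpos : Ep + m ≠ 0)
    (hEp : Ep ^ 2 = σ ^ 2 + m ^ 2) : σ / (Ep + m) * σ = Ep - m := by
  rw [div_mul_eq_mul_div, div_eq_iff hpos]
  linear_combination -hEp

theorem sqrt_sq_add_sq_add_pos {σ : ℝ} (hσ : σ ≠ 0) (m : ℝ) : 0 < √(σ ^ 2 + m ^ 2) + m := by
  have : -m < √(σ ^ 2 + m ^ 2) := Real.lt_sqrt_of_sq_lt (by nlinarith [sq_pos_of_ne_zero hσ])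
  linarith

theorem massive_dirac_positive_eigenstate_general (V E : ℕ)
    (B : Matrix (Fin V) (Fin E) ℝ) (m : ℝ)
    (H : Matrix (Fin V ⊕ Fin E) (Fin V ⊕ Fin E) ℝ)
    (hH : H = Matrix.fromBlocks (m • (1 : Matrix (Fin V) (Fin V) ℝ)) B Bᵀ
      (-(m • (1 : Matrix (Fin E) (Fin E) ℝ))))
    (u : Fin V → ℝ) (v : Fin E → ℝ) (σ : ℝ) (hσ : 0 < σ)
    (hBv : B.mulVec v = σ • u) (hBu : Bᵀ.mulVec u = σ • v)
    (Ep k : ℝ) (hEp : Ep = Real.sqrt (σ ^ 2 + m ^ 2)) (hk : k = σ / (Ep + m)) :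
    H.mulVec (Sum.elim u (k • v)) = Ep • Sum.elim u (k • v) := by
  have hpos : Ep + m ≠ 0 := hEp ▸ (sqrt_sq_add_sq_add_pos hσ.ne' m).ne'
  have hEp_sq : Ep ^ 2 = σ ^ 2 + m ^ 2 := by
    rw [hEp, Real.sq_sqrt (by positivity)]
  subst hH hk
  exact fromBlocks_mass_mulVec_singular_pair hBv hBu (div_add_mul_self_eq_sub hpos hEp_sq)
    (div_mul_cancel₀ σ hpos)

/-- Let `H = [[m I_V, B], [Bᵀ, -m I_E]]` with mass `m ≥ 0`, and let
`u, v, σ` (with `σ > 0`) form a singular pair of `B` (`B v = σ u`, `Bᵀ u = σ v`).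
With `E₊ = √(σ² + m²)` and `k = σ / (E₊ + m)`, the spinor `ψ⁺ = (u, k v)` is an
eigenstate of `H` with energy `E₊`: `H ψ⁺ = E₊ ψ⁺`. -/
theorem massive_dirac_positive_eigenstate (V E : ℕ)
    (B : Matrix (Fin V) (Fin E) ℝ) (m : ℝ) (hm : 0 ≤ m)
    (H : Matrix (Fin V ⊕ Fin E) (Fin V ⊕ Fin E) ℝ)
    (hH : H = Matrix.fromBlocks (m • (1 : Matrix (Fin V) (Fin V) ℝ)) B Bᵀ
      (-(m • (1 : Matrix (Fin E) (Fin E) ℝ))))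
    (u : Fin V → ℝ) (v : Fin E → ℝ) (σ : ℝ) (hσ : 0 < σ)
    (hBv : B.mulVec v = σ • u) (hBu : Bᵀ.mulVec u = σ • v)
    (Ep k : ℝ) (hEp : Ep = Real.sqrt (σ ^ 2 + m ^ 2)) (hk : k = σ / (Ep + m)) :
    H.mulVec (Sum.elim u (k • v)) = Ep • Sum.elim u (k • v) :=
  massive_dirac_positive_eigenstate_general V E B m H hH u v σ hσ hBv hBu Ep k hEp hk
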